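/- arXiv:2408.02411 — 2 statements merged into one kernel-verified Lean document; each statement's English description precedes it below -/
import Mathlib

section
/- Let < be a convex total order on Δ⁺ satisfying the additional property below, and let α < β be a minimal pair with α+β ∈ Δ⁺. Then there do not exist an integer k ≥ 1 and positive roots γ₁,…,γ_k ∈ Δ⁺ with α < γ_a < α+β for all 1 ≤ a ≤ k and γ₁+⋯+γ_k = 2α+β. -/
set_option linter.unusedSectionVars false


noncomputable section

namespace ADEShuffle

/-- The Euler form of a quiver with vertex set `I`, arrow set `A`,
source map `s` and target map `t`. -/
def eulerForm {I A : Type} [Fintype I] [Fintype A] (s t : A → I) (v w : I → ℤ) : ℤ :=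
  (∑ i, v i * w i) - ∑ a, v (s a) * w (t a)

/-- The real-coefficients Euler form. -/
def eulerFormR {I A : Type} [Fintype I] [Fintype A] (s t : A → I) (v w : I → ℝ) : ℝ :=
  (∑ i, v i * w i) - ∑ a, v (s a) * w (t a)

/-- The Euler form evaluated on dimension vectors in `ℕ^I`. -/
def eulerN {I A : Type} [Fintype I] [Fintype A] (s t : A → I) (v w : I → ℕ) : ℤ :=
  eulerForm s t (fun i => (v i : ℤ)) (fun i => (w i : ℤ))

/-- Positive roots: nonzero `v ∈ ℕ^I` with `(v,v) = 2`, where `(v,w) = ⟨v,w⟩ + ⟨w,v⟩`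
is the symmetrized Euler form. -/
def IsPosRoot {I A : Type} [Fintype I] [Fintype A] (s t : A → I) (v : I → ℕ) : Prop :=
  v ≠ 0 ∧ eulerN s t v v + eulerN s t v v = 2

section Aux

variable {I A : Type} [Fintype I] [Fintype A]

/-- cast of an ℕ-vector to a ℤ-vector -/
def cz (v : I → ℕ) : I → ℤ := fun i => (v i : ℤ)

lemma cz_add (v w : I → ℕ) : cz (v + w) = cz v + cz w := by
  funext i; simp [cz]

lemma cz_zero : cz (0 : I → ℕ) = 0 := by
  funext i; simp [cz]

lemma cz_inj {v w : I → ℕ} (h : cz v = cz w) : v = w := by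
  funext i; have := congrFun h i; simpa [cz] using this

lemma cz_ne_zero {v : I → ℕ} (h : v ≠ 0) : cz v ≠ 0 := by
  intro h0; apply h; funext i; have := congrFun h0 i; simpa [cz] using this

variable (s t : A → I)

/-- symmetrized Euler form -/
def Bz (v w : I → ℤ) : ℤ := eulerForm s t v w + eulerForm s t w v

lemma Bz_symm (v w : I → ℤ) : Bz s t v w = Bz s t w v := add_comm _ _

lemma eulerForm_add_left (u v w : I → ℤ) :
    eulerForm s t (u + v) w = eulerForm s t u w + eulerForm s t v w := by
  simp only [eulerForm, Pi.add_apply, add_mul, Finset.sum_add_distrib]; ring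

lemma eulerForm_add_right (u v w : I → ℤ) :
    eulerForm s t u (v + w) = eulerForm s t u v + eulerForm s t u w := by
  simp only [eulerForm, Pi.add_apply, mul_add, Finset.sum_add_distrib]; ring

lemma eulerForm_neg_left (u w : I → ℤ) :
    eulerForm s t (-u) w = - eulerForm s t u w := by
  simp only [eulerForm, Pi.neg_apply, neg_mul, Finset.sum_neg_distrib]; ring

lemma eulerForm_neg_right (u w : I → ℤ) :
    eulerForm s t u (-w) = - eulerForm s t u w := by
  simp only [eulerForm, Pi.neg_apply, mul_neg, Finset.sum_neg_distrib]; ring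

lemma Bz_add_left (u v w : I → ℤ) :
    Bz s t (u + v) w = Bz s t u w + Bz s t v w := by
  simp only [Bz, eulerForm_add_left, eulerForm_add_right]; ring

lemma Bz_add_right (u v w : I → ℤ) :
    Bz s t u (v + w) = Bz s t u v + Bz s t u w := by
  simp only [Bz, eulerForm_add_left, eulerForm_add_right]; ring

lemma Bz_neg_left (u w : I → ℤ) : Bz s t (-u) w = - Bz s t u w := by
  simp only [Bz, eulerForm_neg_left, eulerForm_neg_right]; ring

lemma Bz_sub_left (u v w : I → ℤ) :
    Bz s t (u - v) w = Bz s t u w - Bz s t v w := by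
  rw [sub_eq_add_neg, Bz_add_left, Bz_neg_left]; ring

lemma Bz_sub_right (u v w : I → ℤ) :
    Bz s t u (v - w) = Bz s t u v - Bz s t u w := by
  rw [Bz_symm, Bz_sub_left, Bz_symm s t v u, Bz_symm s t w u]

lemma Bz_zero_right (v : I → ℤ) : Bz s t v 0 = 0 := by
  simp [Bz, eulerForm]

lemma rootBz {v : I → ℕ} (h : IsPosRoot s t v) : Bz s t (cz v) (cz v) = 2 := h.2

lemma Bz_pos_of_ne
    (hPosDef : ∀ v : I → ℝ, v ≠ 0 → 0 < eulerFormR s t v v + eulerFormR s t v v)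
    (v : I → ℤ) (hv : v ≠ 0) : 0 < Bz s t v v := by
  have hv' : (fun i => (v i : ℝ)) ≠ 0 := by
    intro h; apply hv; funext i
    have := congrFun h i; simp only [Pi.zero_apply] at this; exact_mod_cast this
  have h := hPosDef _ hv'
  have hc : eulerFormR s t (fun i => (v i : ℝ)) (fun i => (v i : ℝ))
      = ((eulerForm s t v v : ℤ) : ℝ) := by
    simp only [eulerFormR, eulerForm]; push_cast; ring
  rw [hc] at h
  have h2 : (0 : ℝ) < ((eulerForm s t v v + eulerForm s t v v : ℤ) : ℝ) := by
    push_cast; linarith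
  exact_mod_cast h2

lemma two_le_Bz
    (hPosDef : ∀ v : I → ℝ, v ≠ 0 → 0 < eulerFormR s t v v + eulerFormR s t v v)
    (v : I → ℤ) (hv : v ≠ 0) : 2 ≤ Bz s t v v := by
  have h1 := Bz_pos_of_ne s t hPosDef v hv
  have h2 : Bz s t v v = 2 * eulerForm s t v v := by simp [Bz]; ring
  omega

end Aux



section Aux2

variable {I A : Type} [Fintype I] [Fintype A] (s t : A → I)

/-- sign lemma: a vector of norm 2 is plus or minus a positive root -/
lemma sign_lemma
    (hPosDef : ∀ v : I → ℝ, v ≠ 0 → 0 < eulerFormR s t v v + eulerFormR s t v v)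
    (v : I → ℤ) (hv : Bz s t v v = 2) :
    (∃ w, IsPosRoot s t w ∧ v = cz w) ∨ (∃ w, IsPosRoot s t w ∧ v = - cz w) := by
  classical
  set p : I → ℕ := fun i => (v i).toNat with hp
  set q : I → ℕ := fun i => (-(v i)).toNat with hq
  have hv_eq : v = cz p - cz q := by
    funext i; simp only [cz, hp, hq, Pi.sub_apply]; omega
  have hBpq : Bz s t (cz p) (cz q) ≤ 0 := by
    have hdiag : ∀ i : I, (cz p) i * (cz q) i = 0 := by
      intro i; simp only [cz, hp, hq]
      rcases le_or_gt 0 (v i) with h | h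
      · have : (-(v i)).toNat = 0 := by omega
        simp [this]
      · have : (v i).toNat = 0 := by omega
        simp [this]
    have h1 : ∀ i : I, (cz q) i * (cz p) i = 0 := by
      intro i; rw [mul_comm]; exact hdiag i
    have harr : ∀ u w : I → ℕ, (0:ℤ) ≤ ∑ a, (cz u) (s a) * (cz w) (t a) := by
      intro u w; apply Finset.sum_nonneg; intro a _
      exact mul_nonneg (by simp [cz]) (by simp [cz])
    have e1 : Bz s t (cz p) (cz q)
        = (∑ i, (cz p) i * (cz q) i) + (∑ i, (cz q) i * (cz p) i)
          - (∑ a, (cz p) (s a) * (cz q) (t a)) - (∑ a, (cz q) (s a) * (cz p) (t a)) := by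
      simp only [Bz, eulerForm]; ring
    rw [e1]
    have := harr p q; have := harr q p
    simp only [hdiag, h1, Finset.sum_const_zero]
    linarith [harr p q, harr q p]
  have hvne : v ≠ 0 := by
    intro h0; rw [h0] at hv
    have : Bz s t 0 0 = 0 := Bz_zero_right s t 0
    omega
  have hexp : Bz s t v v = Bz s t (cz p) (cz p) + Bz s t (cz q) (cz q)
      - 2 * Bz s t (cz p) (cz q) := by
    rw [hv_eq, Bz_sub_left, Bz_sub_right, Bz_sub_right, Bz_symm s t (cz q) (cz p)]; ring
  by_cases hq0 : q = 0
  · left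
    have hpe : v = cz p := by rw [hv_eq, hq0, cz_zero]; ring
    have hp0 : p ≠ 0 := by intro h; apply hvne; rw [hpe, h, cz_zero]
    refine ⟨p, ⟨hp0, ?_⟩, hpe⟩
    show Bz s t (cz p) (cz p) = 2
    rw [← hpe]; exact hv
  · by_cases hp0 : p = 0
    · right
      have hpe : v = - cz q := by rw [hv_eq, hp0, cz_zero]; ring
      have hq0' : q ≠ 0 := hq0
      refine ⟨q, ⟨hq0', ?_⟩, hpe⟩
      have heq : Bz s t (- cz q) (- cz q) = Bz s t (cz q) (cz q) := by
        rw [Bz_neg_left, Bz_symm, Bz_neg_left, Bz_symm]; ring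
      show Bz s t (cz q) (cz q) = 2
      rw [← heq, ← hpe]; exact hv
    · exfalso
      have h2p := two_le_Bz s t hPosDef (cz p) (cz_ne_zero hp0)
      have h2q := two_le_Bz s t hPosDef (cz q) (cz_ne_zero hq0)
      omega

lemma Bz_le_one
    (hPosDef : ∀ v : I → ℝ, v ≠ 0 → 0 < eulerFormR s t v v + eulerFormR s t v v)
    {u w : I → ℕ} (hu : IsPosRoot s t u) (hw : IsPosRoot s t w) (hne : u ≠ w) :
    Bz s t (cz u) (cz w) ≤ 1 := by
  have hne' : cz u - cz w ≠ 0 := by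
    intro h; apply hne; apply cz_inj; linear_combination (norm := abel) h
  have h2 := two_le_Bz s t hPosDef _ hne'
  rw [Bz_sub_left, Bz_sub_right, Bz_sub_right, rootBz s t hu, rootBz s t hw,
    Bz_symm s t (cz w) (cz u)] at h2
  omega

lemma neg_one_le_Bz
    (hPosDef : ∀ v : I → ℝ, v ≠ 0 → 0 < eulerFormR s t v v + eulerFormR s t v v)
    {u w : I → ℕ} (hu : IsPosRoot s t u) (hw : IsPosRoot s t w) :
    -1 ≤ Bz s t (cz u) (cz w) := by
  have hne' : cz u + cz w ≠ 0 := by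
    rw [← cz_add]; apply cz_ne_zero
    intro h; apply hu.1; funext i
    have := congrFun h i; simp only [Pi.add_apply, Pi.zero_apply] at this ⊢; omega
  have h2 := two_le_Bz s t hPosDef _ hne'
  rw [Bz_add_left, Bz_add_right, Bz_add_right, rootBz s t hu, rootBz s t hw,
    Bz_symm s t (cz w) (cz u)] at h2
  omega

lemma root_add {u w : I → ℕ} (hu : IsPosRoot s t u) (hw : IsPosRoot s t w)
    (hB : Bz s t (cz u) (cz w) = -1) : IsPosRoot s t (u + w) := by
  constructor
  · intro h; apply hu.1; funext i
    have := congrFun h i; simp only [Pi.add_apply, Pi.zero_apply] at this ⊢; omega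
  · show Bz s t (cz (u+w)) (cz (u+w)) = 2
    rw [cz_add, Bz_add_left, Bz_add_right, Bz_add_right, rootBz s t hu, rootBz s t hw,
      Bz_symm s t (cz w) (cz u), hB]
    ring

lemma root_sub
    (hPosDef : ∀ v : I → ℝ, v ≠ 0 → 0 < eulerFormR s t v v + eulerFormR s t v v)
    {u w : I → ℕ} (hu : IsPosRoot s t u) (hw : IsPosRoot s t w)
    (hB : Bz s t (cz u) (cz w) = 1) :
    ∃ τ, IsPosRoot s t τ ∧ (w = u + τ ∨ u = w + τ) := by
  have h2 : Bz s t (cz w - cz u) (cz w - cz u) = 2 := by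
    rw [Bz_sub_left, Bz_sub_right, Bz_sub_right, rootBz s t hu, rootBz s t hw,
      Bz_symm s t (cz w) (cz u), hB]
    ring
  rcases sign_lemma s t hPosDef _ h2 with ⟨τ, hτ, he⟩ | ⟨τ, hτ, he⟩
  · refine ⟨τ, hτ, Or.inl ?_⟩
    apply cz_inj; rw [cz_add, ← sub_eq_iff_eq_add']; exact he
  · refine ⟨τ, hτ, Or.inr ?_⟩
    apply cz_inj; rw [cz_add, ← sub_eq_iff_eq_add']
    rw [← neg_sub (cz w) (cz u), he, neg_neg]

lemma Bz_multiset (v : I → ℤ) (M : Multiset (I → ℕ)) :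
    Bz s t v (cz M.sum) = (M.map (fun g => Bz s t v (cz g))).sum := by
  induction M using Multiset.induction_on with
  | empty =>
    simp only [Multiset.sum_zero, Multiset.map_zero, cz_zero, Bz_zero_right,
      Multiset.sum_zero]
  | cons a M ih =>
    rw [Multiset.sum_cons, cz_add, Bz_add_right, Multiset.map_cons, Multiset.sum_cons, ih]

lemma pair_bound
    (hPosDef : ∀ v : I → ℝ, v ≠ 0 → 0 < eulerFormR s t v v + eulerFormR s t v v)
    (M : Multiset (I → ℕ)) (hroot : ∀ g ∈ M, IsPosRoot s t g)
    (hpair : ∀ g h M₀, M = g ::ₘ h ::ₘ M₀ → 0 ≤ Bz s t (cz g) (cz h)) :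
    2 * Multiset.card M ≤ Bz s t (cz M.sum) (cz M.sum) := by
  induction M using Multiset.induction_on with
  | empty =>
    have : cz (0 : I → ℕ) = 0 := by funext i; simp [cz]
    simp only [Multiset.sum_zero, Multiset.card_zero, this, Bz_zero_right]
    simp [Bz, eulerForm]
  | cons a M ih =>
    have hcross : 0 ≤ Bz s t (cz a) (cz M.sum) := by
      rw [Bz_multiset]
      apply Multiset.sum_nonneg
      intro x hx
      obtain ⟨g, hg, rfl⟩ := Multiset.mem_map.mp hx
      obtain ⟨M₁, hM₁⟩ := Multiset.exists_cons_of_mem hg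
      exact hpair a g M₁ (by rw [hM₁])
    have hM0 : 2 * Multiset.card M ≤ Bz s t (cz M.sum) (cz M.sum) := by
      apply ih
      · intro g hg; exact hroot g (Multiset.mem_cons_of_mem hg)
      · intro g h M₁ hM
        have : a ::ₘ M = g ::ₘ h ::ₘ (a ::ₘ M₁) := by
          rw [hM, Multiset.cons_swap a g, Multiset.cons_swap a h]
        exact hpair g h (a ::ₘ M₁) this
    have ha : IsPosRoot s t a := hroot a (Multiset.mem_cons_self a M)
    rw [Multiset.sum_cons, cz_add, Bz_add_left, Bz_add_right, Bz_add_right,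
      rootBz s t ha, Bz_symm s t (cz M.sum) (cz a)]
    simp only [Multiset.card_cons]
    push_cast
    linarith

end Aux2

/-- for a convex total order on the positive roots satisfying the
additional property (no family of roots `γ₁ ≤ … ≤ γ_k < δ₁ ≤ … ≤ δ_l` with equal sums),
if `α < β` is a minimal pair with `α + β` a positive root, then there are no `k ≥ 1`
positive roots `γ₁, …, γ_k` with `α < γ_a < α + β` and `γ₁ + ⋯ + γ_k = 2α + β`. -/
theorem stmt2
    (I A : Type) [Fintype I] [Fintype A] (s t : A → I)
    (hNoLoops : ∀ a, s a ≠ t a)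
    (hPosDef : ∀ v : I → ℝ, v ≠ 0 → 0 < eulerFormR s t v v + eulerFormR s t v v)
    (lt : (I → ℕ) → (I → ℕ) → Prop)
    (hIrrefl : ∀ α, IsPosRoot s t α → ¬ lt α α)
    (hTrans : ∀ α β γ, IsPosRoot s t α → IsPosRoot s t β → IsPosRoot s t γ →
      lt α β → lt β γ → lt α γ)
    (hTotal : ∀ α β, IsPosRoot s t α → IsPosRoot s t β → α ≠ β → lt α β ∨ lt β α)
    (hConvex : ∀ α β, IsPosRoot s t α → IsPosRoot s t β → lt α β →
      IsPosRoot s t (α + β) → lt α (α + β) ∧ lt (α + β) β)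
    (hExtra : ¬ ∃ (k l : ℕ) (γ : Fin k → (I → ℕ)) (δ : Fin l → (I → ℕ)),
      1 ≤ k ∧ 1 ≤ l ∧ (∀ a, IsPosRoot s t (γ a)) ∧ (∀ b, IsPosRoot s t (δ b)) ∧
      (∀ a b, lt (γ a) (δ b)) ∧ (∑ a, γ a) = (∑ b, δ b))
    (α β : I → ℕ) (hα : IsPosRoot s t α) (hβ : IsPosRoot s t β) (hlt : lt α β)
    (hsum : IsPosRoot s t (α + β))
    (hmin : ¬ ∃ α' β', IsPosRoot s t α' ∧ IsPosRoot s t β' ∧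
      lt α α' ∧ lt α' β' ∧ lt β' β ∧ α' + β' = α + β) :
    ¬ ∃ (k : ℕ) (γ : Fin k → (I → ℕ)), 1 ≤ k ∧
      (∀ a, IsPosRoot s t (γ a)) ∧
      (∀ a, lt α (γ a) ∧ lt (γ a) (α + β)) ∧
      (∑ a, γ a) = 2 • α + β := by
  rintro ⟨k, γ, hk1, hroots, hbetw, hsum2⟩
  classical
  have asym : ∀ u v : I → ℕ, IsPosRoot s t u → IsPosRoot s t v →
      lt u v → lt v u → False :=
    fun u v hu hv h1 h2 => hIrrefl u hu (hTrans u v u hu hv hu h1 h2)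
  have lt_ne : ∀ u v : I → ℕ, IsPosRoot s t u → lt u v → u ≠ v :=
    fun u v hu h1 he => hIrrefl u hu (he ▸ h1)
  have hαβ := hConvex α β hα hβ hlt hsum
  have Bxx : Bz s t (cz α) (cz α) = 2 := rootBz s t hα
  have Byy : Bz s t (cz β) (cz β) = 2 := rootBz s t hβ
  have Bxy : Bz s t (cz α) (cz β) = -1 := by
    have h := rootBz s t hsum
    rw [cz_add, Bz_add_left, Bz_add_right, Bz_add_right, Bxx, Byy,
      Bz_symm s t (cz β) (cz α)] at h
    omega
  have Byx : Bz s t (cz β) (cz α) = -1 := by rw [Bz_symm]; exact Bxy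
  have hcz2 : cz (2 • α + β) = cz α + cz α + cz β := by
    funext i
    show ((2 • α + β) i : ℤ) = _
    simp only [Pi.add_apply, Pi.smul_apply, smul_eq_mul, cz]
    push_cast; ring
  -- the key lemma about pairs summing to α + β
  have keyJ : ∀ p q w : I → ℕ, IsPosRoot s t p → IsPosRoot s t q → IsPosRoot s t w →
      lt α p → lt p (α + β) → lt q (α + β) →
      Bz s t (cz q) (cz w) = -1 → Bz s t (cz p) (cz (q + w)) = -1 →
      p + (q + w) = α + β → lt β (q + w) ∧ lt β w := by
    intro p q w hRp hRq hRw hαp hpαβ hqαβ hBqw hBpqw hadd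
    have hRqw : IsPosRoot s t (q + w) := root_add s t hRq hRw hBqw
    have hnepqw : p ≠ q + w := by
      intro h; rw [← h, rootBz s t hRp] at hBpqw; omega
    have hRsum : IsPosRoot s t (p + (q + w)) := by rw [hadd]; exact hsum
    have hpρ : lt p (q + w) := by
      rcases hTotal p (q + w) hRp hRqw hnepqw with h | h
      · exact h
      · exfalso
        have h2 := (hConvex (q + w) p hRqw hRp h (by rw [add_comm]; exact hRsum)).2
        rw [add_comm (q + w) p, hadd] at h2
        exact asym p (α + β) hRp hsum hpαβ h2
    have hαβρ : lt (α + β) (q + w) := by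
      have h2 := (hConvex p (q + w) hRp hRqw hpρ hRsum).2
      rwa [hadd] at h2
    have hneρβ : q + w ≠ β := by
      intro h
      rw [h] at hadd
      have h2 : p = α := add_right_cancel hadd
      exact hIrrefl α hα (h2 ▸ hαp)
    have hβρ : lt β (q + w) := by
      rcases hTotal (q + w) β hRqw hβ hneρβ with h | h
      · exact absurd ⟨p, q + w, hRp, hRqw, hαp, hpρ, h, hadd⟩ hmin
      · exact h
    have hneqw : q ≠ w := by
      intro h; rw [h, rootBz s t hRw] at hBqw; omega
    have hqw : lt q w := by
      rcases hTotal q w hRq hRw hneqw with h | h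
      · exact h
      · exfalso
        have h2 := (hConvex w q hRw hRq h (by rw [add_comm]; exact hRqw)).2
        rw [add_comm w q] at h2
        have c1 := hTrans β (q + w) q hβ hRqw hRq hβρ h2
        have c2 := hTrans β q (α + β) hβ hRq hsum c1 hqαβ
        exact asym β (α + β) hβ hsum c2 hαβ.2
    exact ⟨hβρ, hTrans β (q + w) w hβ hRqw hRw hβρ (hConvex q w hRq hRw hqw hRqw).2⟩
  -- main induction
  have key : ∀ n : ℕ, ∀ M : Multiset (I → ℕ), Multiset.card M = n →
      (∀ g ∈ M, IsPosRoot s t g ∧ lt α g ∧ lt g (α + β)) →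
      M.sum = 2 • α + β → False := by
    intro n
    induction n using Nat.strong_induction_on with
    | _ n IH =>
      intro M hcard hmem hsumM
      have hB3 : (M.map (fun g => Bz s t (cz α) (cz g))).sum = 3 := by
        rw [← Bz_multiset, hsumM, hcz2, Bz_add_right, Bz_add_right, Bxx, Bxy]
        norm_num
      have hle1 : ∀ b ∈ M.map (fun g => Bz s t (cz α) (cz g)), b ≤ 1 := by
        intro b hb
        obtain ⟨g, hg, rfl⟩ := Multiset.mem_map.mp hb
        exact Bz_le_one s t hPosDef hα (hmem g hg).1 (lt_ne α g hα (hmem g hg).2.1)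
      have hcard3 : 3 ≤ n := by
        have hbound := Multiset.sum_le_card_nsmul _ 1 hle1
        rw [hB3, Multiset.card_map, hcard] at hbound
        simpa using hbound
      rcases (by omega : 4 ≤ n ∨ n = 3) with h4 | h3
      · -- reduction step
        have reduce : ∀ g h M₀, M = g ::ₘ h ::ₘ M₀ → lt g h →
            Bz s t (cz g) (cz h) = -1 → False := by
          intro g h M₀ hM hgh hB
          have hgmem : g ∈ M := by rw [hM]; exact Multiset.mem_cons_self _ _
          have hhmem : h ∈ M := by
            rw [hM]; exact Multiset.mem_cons_of_mem (Multiset.mem_cons_self _ _)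
          obtain ⟨hRg, hαg, hgαβ⟩ := hmem g hgmem
          obtain ⟨hRh, hαh, hhαβ⟩ := hmem h hhmem
          have hRδ := root_add s t hRg hRh hB
          have hconv := hConvex g h hRg hRh hgh hRδ
          have hc2 : Multiset.card M = Multiset.card M₀ + 2 := by
            rw [hM, Multiset.card_cons, Multiset.card_cons]
          apply IH (n - 1) (by omega) ((g + h) ::ₘ M₀)
          · rw [Multiset.card_cons]; omega
          · intro g' hg'
            rcases Multiset.mem_cons.mp hg' with rfl | hg''
            · exact ⟨hRδ, hTrans α g (g + h) hα hRg hRδ hαg hconv.1,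
                hTrans (g + h) h (α + β) hRδ hRh hsum hconv.2 hhαβ⟩
            · exact hmem g' (by
                rw [hM]; exact Multiset.mem_cons_of_mem (Multiset.mem_cons_of_mem hg''))
          · rw [Multiset.sum_cons]
            rw [hM, Multiset.sum_cons, Multiset.sum_cons, ← add_assoc] at hsumM
            exact hsumM
        have hex : ∃ g h M₀, M = g ::ₘ h ::ₘ M₀ ∧ Bz s t (cz g) (cz h) < 0 := by
          by_contra hno
          push_neg at hno
          have hb := pair_bound s t hPosDef M (fun g hg => (hmem g hg).1)
            (fun g h M₀ hM => hno g h M₀ hM)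
          rw [hsumM, hcz2] at hb
          have h6 : Bz s t (cz α + cz α + cz β) (cz α + cz α + cz β) = 6 := by
            simp only [Bz_add_left, Bz_add_right, Bxx, Bxy, Byx, Byy]; norm_num
          rw [h6, hcard] at hb
          omega
        obtain ⟨g, h, M₀, hM, hBneg⟩ := hex
        have hgmem : g ∈ M := by rw [hM]; exact Multiset.mem_cons_self _ _
        have hhmem : h ∈ M := by
          rw [hM]; exact Multiset.mem_cons_of_mem (Multiset.mem_cons_self _ _)
        have hRg := (hmem g hgmem).1
        have hRh := (hmem h hhmem).1
        have hge := neg_one_le_Bz s t hPosDef hRg hRh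
        have hB : Bz s t (cz g) (cz h) = -1 := by omega
        have hne : g ≠ h := by
          intro he; rw [he, rootBz s t hRh] at hB; omega
        rcases hTotal g h hRg hRh hne with hgh | hhg
        · exact reduce g h M₀ hM hgh hB
        · exact reduce h g M₀ (by rw [hM, Multiset.cons_swap]) hhg
            (by rw [Bz_symm]; exact hB)
      · -- n = 3
        rw [h3] at hcard
        obtain ⟨g1, g2, g3, hM⟩ := Multiset.card_eq_three.mp hcard
        have m1 : g1 ∈ M := by rw [hM]; simp
        have m2 : g2 ∈ M := by rw [hM]; simp
        have m3 : g3 ∈ M := by rw [hM]; simp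
        obtain ⟨hR1, hα1, h1αβ⟩ := hmem g1 m1
        obtain ⟨hR2, hα2, h2αβ⟩ := hmem g2 m2
        obtain ⟨hR3, hα3, h3αβ⟩ := hmem g3 m3
        have hg123 : g1 + (g2 + g3) = 2 • α + β := by
          rw [hM] at hsumM
          simpa [Multiset.insert_eq_cons, Multiset.sum_cons, Multiset.sum_singleton]
            using hsumM
        have hu : cz g1 + (cz g2 + cz g3) = cz α + cz α + cz β := by
          have h := congrArg cz hg123
          rw [cz_add, cz_add, hcz2] at h
          exact h
        -- pairing with α
        have Ex : Bz s t (cz α) (cz g1) + (Bz s t (cz α) (cz g2)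
            + Bz s t (cz α) (cz g3)) = 3 := by
          have h := congrArg (fun z => Bz s t (cz α) z) hu
          simp only [Bz_add_right] at h
          rw [Bxx, Bxy] at h
          omega
        have L1 := Bz_le_one s t hPosDef hα hR1 (lt_ne α g1 hα hα1)
        have L2 := Bz_le_one s t hPosDef hα hR2 (lt_ne α g2 hα hα2)
        have L3 := Bz_le_one s t hPosDef hα hR3 (lt_ne α g3 hα hα3)
        have Bx1 : Bz s t (cz α) (cz g1) = 1 := by omega
        have Bx2 : Bz s t (cz α) (cz g2) = 1 := by omega
        have Bx3 : Bz s t (cz α) (cz g3) = 1 := by omega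
        -- pairing with β
        have Ey : Bz s t (cz β) (cz g1) + (Bz s t (cz β) (cz g2)
            + Bz s t (cz β) (cz g3)) = 0 := by
          have h := congrArg (fun z => Bz s t (cz β) z) hu
          simp only [Bz_add_right] at h
          rw [Byx, Byy] at h
          omega
        have M1 := Bz_le_one s t hPosDef hsum hR1 (lt_ne g1 (α + β) hR1 h1αβ).symm
        have M2 := Bz_le_one s t hPosDef hsum hR2 (lt_ne g2 (α + β) hR2 h2αβ).symm
        have M3 := Bz_le_one s t hPosDef hsum hR3 (lt_ne g3 (α + β) hR3 h3αβ).symm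
        rw [cz_add, Bz_add_left] at M1 M2 M3
        have By1 : Bz s t (cz β) (cz g1) = 0 := by omega
        have By2 : Bz s t (cz β) (cz g2) = 0 := by omega
        have By3 : Bz s t (cz β) (cz g3) = 0 := by omega
        -- symmetrized facts
        have S1 : Bz s t (cz g1) (cz α) = 1 := by rw [Bz_symm]; exact Bx1
        have S2 : Bz s t (cz g2) (cz α) = 1 := by rw [Bz_symm]; exact Bx2
        have S3 : Bz s t (cz g3) (cz α) = 1 := by rw [Bz_symm]; exact Bx3
        have Sy1 : Bz s t (cz g1) (cz β) = 0 := by rw [Bz_symm]; exact By1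
        have Sy2 : Bz s t (cz g2) (cz β) = 0 := by rw [Bz_symm]; exact By2
        have Sy3 : Bz s t (cz g3) (cz β) = 0 := by rw [Bz_symm]; exact By3
        have E1 : Bz s t (cz g1) (cz g1) + (Bz s t (cz g1) (cz g2) + Bz s t (cz g1) (cz g3))
            = Bz s t (cz g1) (cz α) + Bz s t (cz g1) (cz α) + Bz s t (cz g1) (cz β) := by
          have h := congrArg (fun z => Bz s t (cz g1) z) hu
          simpa only [Bz_add_right] using h
        have E2 : Bz s t (cz g2) (cz g1) + (Bz s t (cz g2) (cz g2) + Bz s t (cz g2) (cz g3))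
            = Bz s t (cz g2) (cz α) + Bz s t (cz g2) (cz α) + Bz s t (cz g2) (cz β) := by
          have h := congrArg (fun z => Bz s t (cz g2) z) hu
          simpa only [Bz_add_right] using h
        have E3 : Bz s t (cz g3) (cz g1) + (Bz s t (cz g3) (cz g2) + Bz s t (cz g3) (cz g3))
            = Bz s t (cz g3) (cz α) + Bz s t (cz g3) (cz α) + Bz s t (cz g3) (cz β) := by
          have h := congrArg (fun z => Bz s t (cz g3) z) hu
          simpa only [Bz_add_right] using h
        rw [rootBz s t hR1, S1, Sy1] at E1
        rw [rootBz s t hR2, S2, Sy2] at E2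
        rw [rootBz s t hR3, S3, Sy3] at E3
        have sym21 : Bz s t (cz g2) (cz g1) = Bz s t (cz g1) (cz g2) := Bz_symm s t _ _
        have sym31 : Bz s t (cz g3) (cz g1) = Bz s t (cz g1) (cz g3) := Bz_symm s t _ _
        have sym32 : Bz s t (cz g3) (cz g2) = Bz s t (cz g2) (cz g3) := Bz_symm s t _ _
        have B12 : Bz s t (cz g1) (cz g2) = 0 := by omega
        have B13 : Bz s t (cz g1) (cz g3) = 0 := by omega
        have B23 : Bz s t (cz g2) (cz g3) = 0 := by omega
        -- no root can be α minus a root here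
        have noBelow : ∀ g τ', IsPosRoot s t g → IsPosRoot s t τ' → lt α g →
            lt g (α + β) → Bz s t (cz α) (cz g) = 1 → Bz s t (cz β) (cz g) = 0 →
            α = g + τ' → False := by
          intro g τ' hRg hRτ hαg hgαβ hBxg hByg heq
          have hct : cz τ' = cz α - cz g := by
            have h := congrArg cz heq
            rw [cz_add] at h
            rw [h]; abel
          have hRgα : IsPosRoot s t (g + τ') := by rw [← heq]; exact hα
          have hBgτ : Bz s t (cz g) (cz τ') = -1 := by
            rw [hct, Bz_sub_right, Bz_symm s t (cz g) (cz α), hBxg, rootBz s t hRg]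
            norm_num
          have hneg : g ≠ τ' := by
            intro he; rw [← he, rootBz s t hRg] at hBgτ; omega
          have hτα : lt τ' α := by
            rcases hTotal g τ' hRg hRτ hneg with hgτ | hτg
            · exfalso
              have h2 := (hConvex g τ' hRg hRτ hgτ hRgα).1
              rw [← heq] at h2
              exact asym α g hα hRg hαg h2
            · have h2 := (hConvex τ' g hRτ hRg hτg (by rw [add_comm]; exact hRgα)).1
              rwa [add_comm τ' g, ← heq] at h2
          have hBτβ : Bz s t (cz τ') (cz β) = -1 := by
            rw [hct, Bz_sub_left, Bxy, Bz_symm s t (cz g) (cz β), hByg]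
            norm_num
          have hRσ : IsPosRoot s t (τ' + β) := root_add s t hRτ hβ hBτβ
          have hσβ := hConvex τ' β hRτ hβ (hTrans τ' α β hRτ hα hβ hτα hlt) hRσ
          have hσg : g + (τ' + β) = α + β := by
            apply cz_inj
            rw [cz_add, cz_add, cz_add, hct]
            abel
          have hBgσ : Bz s t (cz g) (cz (τ' + β)) = -1 := by
            rw [cz_add, Bz_add_right, hBgτ, Bz_symm s t (cz g) (cz β), hByg]
            norm_num
          have hne2 : g ≠ τ' + β := by
            intro he; rw [← he, rootBz s t hRg] at hBgσ; omega
          rcases hTotal g (τ' + β) hRg hRσ hne2 with hcase | hcase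
          · exact hmin ⟨g, τ' + β, hRg, hRσ, hαg, hcase, hσβ.2, hσg⟩
          · have h2 := (hConvex (τ' + β) g hRσ hRg hcase
              (by rw [add_comm, hσg]; exact hsum)).2
            rw [add_comm (τ' + β) g, hσg] at h2
            exact asym g (α + β) hRg hsum hgαβ h2
        -- each γ is α plus a root
        have hτx : ∀ g, IsPosRoot s t g → lt α g → lt g (α + β) →
            Bz s t (cz α) (cz g) = 1 → Bz s t (cz β) (cz g) = 0 →
            ∃ τ, IsPosRoot s t τ ∧ g = α + τ := by
          intro g hRg hαg hgαβ hBxg hByg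
          obtain ⟨τ, hRτ, hcase⟩ := root_sub s t hPosDef hα hRg hBxg
          rcases hcase with h | h
          · exact ⟨τ, hRτ, h⟩
          · exact (noBelow g τ hRg hRτ hαg hgαβ hBxg hByg h).elim
        obtain ⟨τ1, hRτ1, he1⟩ := hτx g1 hR1 hα1 h1αβ Bx1 By1
        obtain ⟨τ2, hRτ2, he2⟩ := hτx g2 hR2 hα2 h2αβ Bx2 By2
        obtain ⟨τ3, hRτ3, he3⟩ := hτx g3 hR3 hα3 h3αβ Bx3 By3
        have hct1 : cz τ1 = cz g1 - cz α := by
          have h := congrArg cz he1; rw [cz_add] at h; rw [h]; abel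
        have hct2 : cz τ2 = cz g2 - cz α := by
          have h := congrArg cz he2; rw [cz_add] at h; rw [h]; abel
        have hct3 : cz τ3 = cz g3 - cz α := by
          have h := congrArg cz he3; rw [cz_add] at h; rw [h]; abel
        -- Euler-form values for the τ's
        have Btt23 : Bz s t (cz τ2) (cz τ3) = 0 := by
          rw [hct2, hct3, Bz_sub_left, Bz_sub_right, Bz_sub_right, B23, S2, Bx3, Bxx]
          norm_num
        have Bu1t2 : Bz s t (cz g1) (cz τ2) = -1 := by
          rw [hct2, Bz_sub_right, B12, S1]; norm_num
        have Bu1t3 : Bz s t (cz g1) (cz τ3) = -1 := by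
          rw [hct3, Bz_sub_right, B13, S1]; norm_num
        have Bu2t3 : Bz s t (cz g2) (cz τ3) = -1 := by
          rw [hct3, Bz_sub_right, B23, S2]; norm_num
        have Bu3t2 : Bz s t (cz g3) (cz τ2) = -1 := by
          rw [hct2, Bz_sub_right, sym32, B23, S3]; norm_num
        -- first application of keyJ : β < τ3
        have hBpqw1 : Bz s t (cz g1) (cz (g2 + τ3)) = -1 := by
          rw [cz_add, Bz_add_right, B12, Bu1t3]; norm_num
        have hadd1 : g1 + (g2 + τ3) = α + β := by
          apply cz_inj
          rw [cz_add, cz_add, cz_add, hct3]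
          linear_combination (norm := abel) hu
        obtain ⟨hβρ1, hβτ3⟩ :=
          keyJ g1 g2 τ3 hR1 hR2 hRτ3 hα1 h1αβ h2αβ Bu2t3 hBpqw1 hadd1
        -- second application of keyJ : β < g1 + τ2
        have hBpqw2 : Bz s t (cz g3) (cz (g1 + τ2)) = -1 := by
          rw [cz_add, Bz_add_right, sym31, B13, Bu3t2]; norm_num
        have hadd2 : g3 + (g1 + τ2) = α + β := by
          apply cz_inj
          rw [cz_add, cz_add, cz_add, hct2]
          linear_combination (norm := abel) hu
        obtain ⟨hβρ2, hβτ2⟩ :=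
          keyJ g3 g1 τ2 hR3 hR1 hRτ2 hα3 h3αβ h1αβ Bu1t2 hBpqw2 hadd2
        -- final contradiction : (g1 + τ2) + τ3 = β with both summands above β
        have hRρ : IsPosRoot s t (g1 + τ2) := root_add s t hR1 hRτ2 Bu1t2
        have hρτβ : (g1 + τ2) + τ3 = β := by
          apply cz_inj
          rw [cz_add, cz_add, hct2, hct3]
          linear_combination (norm := abel) hu
        have hBρτ3 : Bz s t (cz (g1 + τ2)) (cz τ3) = -1 := by
          rw [cz_add, Bz_add_left, Bu1t3, Btt23]; norm_num
        have hneρτ : g1 + τ2 ≠ τ3 := by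
          intro he; rw [he, rootBz s t hRτ3] at hBρτ3; omega
        have hRβ' : IsPosRoot s t ((g1 + τ2) + τ3) := by rw [hρτβ]; exact hβ
        rcases hTotal (g1 + τ2) τ3 hRρ hRτ3 hneρτ with hcase | hcase
        · have h2 := (hConvex (g1 + τ2) τ3 hRρ hRτ3 hcase hRβ').1
          rw [hρτβ] at h2
          exact asym β (g1 + τ2) hβ hRρ hβρ2 h2
        · have h2 := (hConvex τ3 (g1 + τ2) hRτ3 hRρ hcase
            (by rw [add_comm, hρτβ]; exact hβ)).1
          rw [add_comm τ3 (g1 + τ2), hρτβ] at h2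
          exact asym β τ3 hβ hRτ3 hβτ3 h2
  -- apply the key lemma
  apply key (Multiset.card (Multiset.map γ Finset.univ.val)) (Multiset.map γ Finset.univ.val) rfl
  · intro g hg
    obtain ⟨a, _, rfl⟩ := Multiset.mem_map.mp hg
    exact ⟨hroots a, hbetw a⟩
  · rw [← hsum2]; rfl

end ADEShuffle
end
end

section
/- For every nonzero k ∈ ℕ^I and every d ∈ ℤ, the ℚ(q)-vector space B_{k,d} = {R ∈ S_k : R homogeneous of total degree d and of slope ≤ d/|k|} is finite-dimensional. -/
noncomputable section

namespace ADEShuffle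

/-- The field `ℚ(q)`. -/
abbrev Fq : Type := RatFunc ℚ

/-- The variable `q`. -/
def qvar : Fq := RatFunc.X

/-- The index set of the variables `z_{i,b}`, `i ∈ I`, `1 ≤ b ≤ k_i`. -/
abbrev Vars (I : Type) (k : I → ℕ) : Type := Σ i : I, Fin (k i)

/-- Laurent polynomials over `ℚ(q)` in the variables `z_{i,b}` (numerators of shuffle
algebra elements `R = r / ∏_{arrows i→j} ∏_{b,c} (z_{i,b} - z_{j,c})`). -/
abbrev LaurentPoly (I : Type) (k : I → ℕ) : Type := AddMonoidAlgebra Fq ((Vars I k) →₀ ℤ)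

/-- Evaluation of a Laurent polynomial at a point `z : Vars I k → ℚ(q)`. -/
def evalLaurent {I : Type} [Fintype I] {k : I → ℕ} (r : LaurentPoly I k)
    (z : Vars I k → Fq) : Fq :=
  ∑ e ∈ r.coeff.support, r.coeff e * ∏ sv, z sv ^ (e sv)

/-- Two distinct vertices are adjacent if some arrow joins them (in either direction). -/
abbrev Adjacent {I A : Type} (s t : A → I) (i j : I) : Prop :=
  ∃ a, (s a = i ∧ t a = j) ∨ (s a = j ∧ t a = i)

/-- Color-symmetry of a Laurent polynomial (via evaluations at points with nonzero
coordinates, which determine the Laurent polynomial). -/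
def ColorSym {I : Type} [Fintype I] {k : I → ℕ} (r : LaurentPoly I k) : Prop :=
  ∀ e : Vars I k ≃ Vars I k, (∀ sv : Vars I k, (e sv).1 = sv.1) →
    ∀ z : Vars I k → Fq, (∀ sv, z sv ≠ 0) →
      evalLaurent r (z ∘ e) = evalLaurent r z

/-- The wheel conditions. -/
def WheelCond {I A : Type} [Fintype I] (s t : A → I) {k : I → ℕ}
    (r : LaurentPoly I k) : Prop :=
  ∀ i j, Adjacent s t i j → ∀ (hi : 2 ≤ k i) (hj : 1 ≤ k j),
    ∀ z : Vars I k → Fq, (∀ sv, z sv ≠ 0) →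
      z ⟨i, ⟨0, by omega⟩⟩ = qvar * z ⟨j, ⟨0, by omega⟩⟩ →
      z ⟨i, ⟨1, by omega⟩⟩ = qvar⁻¹ * z ⟨j, ⟨0, by omega⟩⟩ →
      evalLaurent r z = 0

/-- The `ξ`-weight of an exponent vector `e` under the substitution scaling the first
`l_i` variables of each color `i` by `ξ`: this is the `ξ`-exponent of the corresponding
monomial of the numerator after substitution. -/
def xiWeight {I : Type} [Fintype I] {k : I → ℕ} (l : I → ℕ) (e : Vars I k →₀ ℤ) : ℤ :=
  ∑ sv : Vars I k, if (sv.2 : ℕ) < l sv.1 then e sv else 0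

/-- The `ξ`-degree of the denominator `∏_{arrows i→j} ∏_{b,c} (z_{i,b} - z_{j,c})`
after scaling the first `l_i` variables of each color by `ξ`: the number of factors
containing at least one scaled variable. -/
def denomXiDeg {I A : Type} [Fintype A] (s t : A → I) (k l : I → ℕ) : ℤ :=
  ∑ a, ((k (s a) : ℤ) * (k (t a) : ℤ) -
    ((k (s a) : ℤ) - (l (s a) : ℤ)) * ((k (t a) : ℤ) - (l (t a) : ℤ)))

/-- `R = r / ∏` is homogeneous of total degree `d` iff every exponent vector in the
support of the numerator `r` has total degree `d + deg ∏ = d + Σ_a k_{s(a)} k_{t(a)}`. -/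
def IsHomogOfDeg {I A : Type} [Fintype I] [Fintype A] (s t : A → I) {k : I → ℕ}
    (d : ℤ) (r : LaurentPoly I k) : Prop :=
  ∀ e ∈ r.coeff.support, (∑ sv : Vars I k, e sv) = d + ∑ a, (k (s a) : ℤ) * (k (t a) : ℤ)

/-- `R = r / ∏` has slope `≤ μ`: for every `l ≤ k`, the degree in `ξ` of `R` with the
first `l_i` variables of each color scaled by `ξ` is at most `μ|l|`; the degree of the
substituted `R` equals `(max ξ-weight of the support of r) - denomXiDeg`. -/
def SlopeLE {I A : Type} [Fintype I] [Fintype A] (s t : A → I) {k : I → ℕ}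
    (μ : ℚ) (r : LaurentPoly I k) : Prop :=
  ∀ l : I → ℕ, (∀ i, l i ≤ k i) → ∀ e ∈ r.coeff.support,
    (xiWeight l e : ℚ) - (denomXiDeg s t k l : ℚ) ≤ μ * ∑ i, (l i : ℚ)

/-!
Every exponent vector occurring in an element of `B_{k,d}` lies in a box that depends only on
`k`, `d` and the quiver, so `B_{k,d}` sits inside the finite-dimensional space of Laurent
polynomials supported on that box. By color symmetry, any variable of color `i` may be moved
to the first slot of color `i`, where the slope condition for `l = δ_i` bounds its exponent
from above, or to the last slot, where the slope condition for `l = k - δ_i` together with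
homogeneity bounds it from below. Color symmetry is stated through evaluations; it passes to
the support because distinct Laurent monomials are distinct characters of `(ℚ(q)ˣ)^n`, hence
linearly independent.
-/

section LaurentMonomials

variable {K ι : Type*} [Field K] [Fintype ι]

def monomialChar (e : ι →₀ ℤ) : (ι → Kˣ) →* K where
  toFun z := ∏ i, (z i : K) ^ e i
  map_one' := by simp
  map_mul' z w := by simp only [Pi.mul_apply, Units.val_mul, mul_zpow, Finset.prod_mul_distrib]

lemma monomialChar_comp_equiv (σ : ι ≃ ι) (e : ι →₀ ℤ) (z : ι → Kˣ) :
    monomialChar (Finsupp.equivMapDomain σ e) z = monomialChar e (z ∘ σ) := by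
  simp only [monomialChar, MonoidHom.coe_mk, OneHom.coe_mk, Finsupp.equivMapDomain_apply,
    Function.comp_apply]
  exact (Equiv.prod_comp σ fun i => (z i : K) ^ e (σ.symm i)).symm.trans (by simp)

lemma two_zpow_injective [CharZero K] : Function.Injective fun n : ℤ => (2 : K) ^ n := by
  intro m n h
  have hℚ : ((2 : ℚ) ^ m : ℚ) = (2 : ℚ) ^ n := by
    exact_mod_cast (by simpa using h : ((2 : ℚ) : K) ^ m = ((2 : ℚ) : K) ^ n)
  exact zpow_right_injective₀ (by norm_num) (by norm_num) hℚ

lemma monomialChar_injective [CharZero K] :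
    Function.Injective (monomialChar : (ι →₀ ℤ) → (ι → Kˣ) →* K) := by
  classical
  intro e e' h
  ext i
  have hpt : ∀ f : ι →₀ ℤ, monomialChar f (Pi.mulSingle i (Units.mk0 (2 : K) two_ne_zero))
      = (2 : K) ^ f i := fun f => by
    simp only [monomialChar, MonoidHom.coe_mk, OneHom.coe_mk]
    rw [Fintype.prod_eq_single i fun j hj => by simp [hj]]
    simp
  exact two_zpow_injective ((hpt e).symm.trans ((DFunLike.congr_fun h _).trans (hpt e')))

lemma eq_zero_of_sum_monomialChar_eq_zero [CharZero K] (f : (ι →₀ ℤ) →₀ K)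
    (h : ∀ z : ι → Kˣ, f.sum (fun e c => c * monomialChar e z) = 0) : f = 0 := by
  have hli : LinearIndependent K fun e : ι →₀ ℤ => ⇑(monomialChar e : (ι → Kˣ) →* K) :=
    (linearIndependent_monoidHom _ K).comp _ monomialChar_injective
  refine linearIndependent_iff.mp hli f (funext fun z => ?_)
  rw [Finsupp.linearCombination_apply, Finsupp.sum, Finset.sum_apply]
  exact h z

lemma eq_of_sum_monomialChar_eq [CharZero K] {f g : (ι →₀ ℤ) →₀ K}
    (h : ∀ z : ι → Kˣ, f.sum (fun e c => c * monomialChar e z)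
      = g.sum (fun e c => c * monomialChar e z)) : f = g := by
  refine sub_eq_zero.mp (eq_zero_of_sum_monomialChar_eq_zero _ fun z => ?_)
  rw [Finsupp.sum_sub_index fun _ _ _ => sub_mul _ _ _, h, sub_self]

end LaurentMonomials

variable {I : Type} [Fintype I] {k : I → ℕ}

lemma ColorSym.equivMapDomain_mem_support {r : LaurentPoly I k} (hr : ColorSym r)
    (σ : Vars I k ≃ Vars I k) (hσ : ∀ x, (σ x).1 = x.1) {e : Vars I k →₀ ℤ}
    (he : e ∈ r.coeff.support) : Finsupp.equivMapDomain σ e ∈ r.coeff.support := by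
  have hinv : Finsupp.equivMapDomain (Finsupp.equivCongrLeft σ) r.coeff = r.coeff := by
    refine eq_of_sum_monomialChar_eq fun z => ?_
    rw [Finsupp.sum_equivMapDomain]
    simp only [Finsupp.equivCongrLeft_apply, monomialChar_comp_equiv]
    exact hr σ hσ _ (fun x => (z x).ne_zero)
  rw [← hinv, Finsupp.mem_support_iff, Finsupp.equivMapDomain_apply,
    ← Finsupp.equivCongrLeft_apply, Equiv.symm_apply_apply]
  exact Finsupp.mem_support_iff.mp he

lemma ColorSym.exists_mem_support_apply_eq {r : LaurentPoly I k} (hr : ColorSym r)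
    {e : Vars I k →₀ ℤ} (he : e ∈ r.coeff.support) {x y : Vars I k} (hxy : x.1 = y.1) :
    ∃ e' ∈ r.coeff.support, e' y = e x := by
  classical
  refine ⟨_, hr.equivMapDomain_mem_support (Equiv.swap x y) (fun z => ?_) he, by simp⟩
  rcases eq_or_ne z x with rfl | hzx
  · simp [hxy]
  rcases eq_or_ne z y with rfl | hzy
  · simp [hxy]
  · rw [Equiv.swap_apply_of_ne_of_ne hzx hzy]

section Slope

variable [DecidableEq I]

lemma xiWeight_single_one {i : I} (hi : 0 < k i) (e : Vars I k →₀ ℤ) :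
    xiWeight (Pi.single i 1) e = e ⟨i, ⟨0, hi⟩⟩ := by
  have hcut : ∀ x : Vars I k,
      (x.2 : ℕ) < Pi.single (M := fun _ => ℕ) i 1 x.1 ↔ x = ⟨i, ⟨0, hi⟩⟩ := by
    rintro ⟨j, c⟩
    by_cases hj : j = i
    · subst hj; simp [Fin.ext_iff]
    · simp [hj]
  simp only [xiWeight, hcut, Fintype.sum_ite_eq']

lemma xiWeight_update_pred {i : I} (hi : 0 < k i) (e : Vars I k →₀ ℤ) :
    xiWeight (Function.update k i (k i - 1)) e = (∑ x, e x) - e ⟨i, ⟨k i - 1, by omega⟩⟩ := by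
  have hcut : ∀ x : Vars I k,
      (x.2 : ℕ) < Function.update k i (k i - 1) x.1 ↔ x ≠ ⟨i, ⟨k i - 1, by omega⟩⟩ := by
    rintro ⟨j, c⟩
    by_cases hj : j = i
    · subst hj; simp [Fin.ext_iff]; omega
    · simp [hj]
  rw [eq_sub_iff_add_eq, ← Fintype.sum_ite_eq' (⟨i, ⟨k i - 1, by omega⟩⟩ : Vars I k) e,
    xiWeight, ← Finset.sum_add_distrib]
  refine Fintype.sum_congr _ _ fun x => ?_
  simp only [hcut]
  by_cases hx : x = ⟨i, ⟨k i - 1, by omega⟩⟩ <;> simp [hx]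

variable {A : Type} [Fintype A] {s t : A → I} {μ : ℚ} {r : LaurentPoly I k}
  {e : Vars I k →₀ ℤ}

lemma exponent_le_of_slopeLE (hsym : ColorSym r) (hslope : SlopeLE s t μ r)
    (he : e ∈ r.coeff.support) (x : Vars I k) :
    (e x : ℚ) ≤ μ + denomXiDeg s t k (Pi.single x.1 1) := by
  obtain ⟨i, b⟩ := x
  have hi : 0 < k i := b.pos
  obtain ⟨e', he', hval⟩ :=
    hsym.exists_mem_support_apply_eq he (x := ⟨i, b⟩) (y := ⟨i, ⟨0, hi⟩⟩) rfl
  have hl : ∀ j, (Pi.single i 1 : I → ℕ) j ≤ k j := fun j => by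
    by_cases hj : j = i
    · subst hj; simpa [Nat.one_le_iff_ne_zero] using hi.ne'
    · simp [hj]
  have h := hslope (Pi.single i 1) hl e' he'
  rw [xiWeight_single_one hi, hval] at h
  have hsum : ∑ j, (((Pi.single i 1 : I → ℕ) j : ℕ) : ℚ) = 1 := by simp [Pi.single_apply]
  rw [hsum] at h
  linarith

lemma le_exponent_of_slopeLE {d : ℤ} (hsym : ColorSym r) (hhom : IsHomogOfDeg s t d r)
    (hslope : SlopeLE s t μ r) (he : e ∈ r.coeff.support) (x : Vars I k) :
    ((d + ∑ a, (k (s a) : ℤ) * k (t a) : ℤ) : ℚ) - μ * (∑ i, (k i : ℚ) - 1)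
      - denomXiDeg s t k (Function.update k x.1 (k x.1 - 1)) ≤ e x := by
  obtain ⟨i, b⟩ := x
  have hi : 0 < k i := b.pos
  obtain ⟨e', he', hval⟩ :=
    hsym.exists_mem_support_apply_eq he (x := ⟨i, b⟩) (y := ⟨i, ⟨k i - 1, by omega⟩⟩) rfl
  have hl : ∀ j, Function.update k i (k i - 1) j ≤ k j := fun j => by
    by_cases hj : j = i
    · subst hj; simp
    · simp [hj]
  have h := hslope _ hl e' he'
  rw [xiWeight_update_pred hi, hhom e' he', hval] at h
  have hsum : ∑ j, ((Function.update k i (k i - 1) j : ℕ) : ℚ) = ∑ j, (k j : ℚ) - 1 := by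
    have hℕ : ∑ j, Function.update k i (k i - 1) j + 1 = ∑ j, k j := by
      rw [Finset.sum_update_of_mem (Finset.mem_univ i),
        ← Finset.sum_erase_add _ _ (Finset.mem_univ i), Finset.sdiff_singleton_eq_erase]
      omega
    rw [eq_sub_iff_add_eq]
    exact_mod_cast hℕ
  rw [hsum] at h
  push_cast at h ⊢
  linarith

end Slope

lemma finiteDimensional_supported {K M : Type*} [Field K] {S : Set M} (hS : S.Finite) :
    FiniteDimensional K (AddMonoidAlgebra.supported K K S) := by
  rw [AddMonoidAlgebra.supported_eq_span_single]
  exact FiniteDimensional.span_of_finite K (hS.image _)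

theorem stmt15_general
    (I A : Type) [Fintype I] [Fintype A] (s t : A → I)
    (k : I → ℕ) (d : ℤ) :
    FiniteDimensional Fq
      (Submodule.span Fq {r : LaurentPoly I k |
        ColorSym r ∧ WheelCond s t r ∧ IsHomogOfDeg s t d r ∧
        SlopeLE s t ((d : ℚ) / ((∑ i, k i : ℕ) : ℚ)) r}) := by
  classical
  set μ : ℚ := (d : ℚ) / ((∑ i, k i : ℕ) : ℚ)
  let lo : Vars I k →₀ ℤ := Finsupp.equivFunOnFinite.symm fun x =>
    ⌈((d + ∑ a, (k (s a) : ℤ) * k (t a) : ℤ) : ℚ) - μ * (∑ i, (k i : ℚ) - 1)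
      - denomXiDeg s t k (Function.update k x.1 (k x.1 - 1))⌉
  let hi : Vars I k →₀ ℤ := Finsupp.equivFunOnFinite.symm fun x =>
    ⌊μ + denomXiDeg s t k (Pi.single x.1 1)⌋
  have hB : Submodule.span Fq {r : LaurentPoly I k |
      ColorSym r ∧ WheelCond s t r ∧ IsHomogOfDeg s t d r ∧ SlopeLE s t μ r}
        ≤ AddMonoidAlgebra.supported Fq Fq (Set.Icc lo hi) := by
    refine Submodule.span_le.mpr fun r ⟨hsym, _, hhom, hslope⟩ e he =>
      ⟨Finsupp.le_def.mpr fun x => ?_, Finsupp.le_def.mpr fun x => ?_⟩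
    · simpa only [lo, Finsupp.coe_equivFunOnFinite_symm, Int.ceil_le]
        using le_exponent_of_slopeLE hsym hhom hslope he x
    · simpa only [hi, Finsupp.coe_equivFunOnFinite_symm, Int.le_floor]
        using exponent_le_of_slopeLE hsym hslope he x
  have := finiteDimensional_supported (K := Fq) (Set.finite_Icc lo hi)
  exact Submodule.finiteDimensional_of_le hB

/-- for `k ≠ 0` and `d ∈ ℤ`, the space
`B_{k,d} = {R ∈ S_k : R homogeneous of degree d, of slope ≤ d/|k|}` is a
finite-dimensional `ℚ(q)`-vector space. -/
theorem stmt15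
    (I A : Type) [Fintype I] [Fintype A] (s t : A → I)
    (hNoLoops : ∀ a, s a ≠ t a)
    (hPosDef : ∀ v : I → ℝ, v ≠ 0 → 0 < eulerFormR s t v v + eulerFormR s t v v)
    (k : I → ℕ) (hk : k ≠ 0) (d : ℤ) :
    FiniteDimensional Fq
      (Submodule.span Fq {r : LaurentPoly I k |
        ColorSym r ∧ WheelCond s t r ∧ IsHomogOfDeg s t d r ∧
        SlopeLE s t ((d : ℚ) / ((∑ i, k i : ℕ) : ℚ)) r}) :=
  stmt15_general I A s t k d

end ADEShuffle
end
end
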